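/- arXiv:1607.01515 — 5 statements merged into one kernel-verified Lean document; each statement's English description precedes it below -/
import Mathlib

section
/- Let X be a smooth, strictly convex Minkowski plane. Then the norm of X is Euclidean (there exists an inner product ⟨·,·⟩ on X with ⟨v,v⟩ = ‖v‖² for all v) if and only if the outer distortion functional is identically 1, i.e. for all linearly independent unit vectors x, y ∈ X and all c ∈ X, r > 0, α, β > 0 with ‖β·x − c‖ = r, ‖α·y − c‖ = r, and ‖t·x − c‖ ≥ r and ‖t·y − c‖ ≥ r for every t ∈ ℝ, one has α = β. -/
variable {X : Type*} [NormedAddCommGroup X] [NormedSpace ℝ X]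

/-- `f` is the norming functional of `x`: `‖f‖ = 1` and `f x = ‖x‖`. -/
def IsNormingFunctional (x : X) (f : X →L[ℝ] ℝ) : Prop :=
  ‖f‖ = 1 ∧ f x = ‖x‖

/-- A normed space is smooth if every nonzero vector has a unique norming functional. -/
def SmoothNormedSpace (X : Type*) [NormedAddCommGroup X] [NormedSpace ℝ X] : Prop :=
  ∀ x : X, x ≠ 0 → ∃! f : X →L[ℝ] ℝ, IsNormingFunctional x f

/-!
For an inner product, `‖t • x - c‖²` is a quadratic in `t` whose minimum is attained exactly at
`t = ⟪x, c⟫`; hence a tangent parameter satisfies `β² = ‖c‖² - r²`, and likewise `α² = ‖c‖² - r²`.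

Conversely, let `u ≠ ±v` be unit vectors with norming functionals `f`, `g`, and let `x ∈ ker f`,
`y ∈ ker g` be unit vectors. Writing `u ∓ v = p • x + q • y`, the unit circle centred at
`p • x - u` touches the lines `ℝ x` and `ℝ y` at `p • x` and `∓ q • y`, so the hypothesis gives
`|p| = |q|` in both cases. Evaluating the two decompositions with `f` and `g` turns this into
`(g u - f v) (1 - g u * f v) = 0`, and strict convexity gives `|g u|, |f v| < 1`, so `g u = f v`.
Thus `⟪a, b⟫ := ‖a‖ f_a b`, with `f_a` any norming functional of `a`, is symmetric; being linear
in `b` it is bilinear, and `⟪a, a⟫ = ‖a‖²`.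
-/

open Module

namespace IsNormingFunctional

variable {x z : X} {f : X →L[ℝ] ℝ}

theorem abs_apply_le_norm (hf : IsNormingFunctional x f) (z : X) : |f z| ≤ ‖z‖ := by
  simpa [hf.1] using f.le_opNorm z

theorem norm_le_norm_add (hf : IsNormingFunctional x f) (hz : f z = 0) : ‖x‖ ≤ ‖x + z‖ :=
  calc ‖x‖ = f (x + z) := by rw [map_add, hz, add_zero, hf.2]
    _ ≤ ‖x + z‖ := (le_abs_self _).trans (hf.abs_apply_le_norm _)

theorem neg (hf : IsNormingFunctional x f) : IsNormingFunctional (-x) (-f) :=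
  ⟨by rw [norm_neg, hf.1], by simp [hf.2]⟩

theorem smul (hf : IsNormingFunctional x f) {c : ℝ} (hc : 0 ≤ c) :
    IsNormingFunctional (c • x) f :=
  ⟨hf.1, by rw [map_smul, hf.2, norm_smul, Real.norm_of_nonneg hc, smul_eq_mul]⟩

theorem abs_apply_lt_one [StrictConvexSpace ℝ X] (hf : IsNormingFunctional x f)
    (hx : ‖x‖ = 1) {u : X} (hu : ‖u‖ = 1) (hux : u ≠ x) (hux' : u ≠ -x) : |f u| < 1 := by
  have eq_of_apply_eq_one (w : X) (hw : ‖w‖ = 1) (hfw : f w = 1) : w = x := by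
    refine eq_of_norm_eq_of_norm_add_eq (hw.trans hx.symm) (le_antisymm (norm_add_le w x) ?_)
    calc ‖w‖ + ‖x‖ = f (w + x) := by rw [map_add, hfw, hf.2, hw, hx]
      _ ≤ ‖w + x‖ := (le_abs_self _).trans (hf.abs_apply_le_norm _)
  refine lt_of_le_of_ne (hu ▸ hf.abs_apply_le_norm u) fun h ↦ ?_
  rcases (abs_eq zero_le_one).mp h with h | h
  · exact hux (eq_of_apply_eq_one u hu h)
  · exact hux' (neg_eq_iff_eq_neg.mp (eq_of_apply_eq_one (-u) (by rwa [norm_neg]) (by simp [h])))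

end IsNormingFunctional

theorem linearIndependent_pair_of_apply {K V : Type*} [Field K] [AddCommGroup V] [Module K V]
    (f : V →ₗ[K] K) {x y : V} (hx : f x ≠ 0) (hy : f y = 0) (hy0 : y ≠ 0) :
    LinearIndependent K ![x, y] := by
  refine LinearIndependent.pair_iff.mpr fun s t hst ↦ ?_
  have hs : s = 0 := by simpa [hy, hx] using congrArg f hst
  subst hs
  exact ⟨rfl, (smul_eq_zero.mp (by simpa using hst)).resolve_right hy0⟩

theorem exists_eq_smul_add_smul {K V : Type*} [Field K] [AddCommGroup V] [Module K V]
    (hdim : finrank K V = 2) {x y : V} (hxy : LinearIndependent K ![x, y]) (w : V) :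
    ∃ p q : K, w = p • x + q • y := by
  have hspan := hxy.span_eq_top_of_card_eq_finrank (by simp [hdim])
  rw [Matrix.range_cons_cons_empty] at hspan
  obtain ⟨p, q, h⟩ := Submodule.mem_span_pair.mp (hspan ▸ Submodule.mem_top : w ∈ _)
  exact ⟨p, q, h.symm⟩

section Plane

variable (hdim : finrank ℝ X = 2)
include hdim

theorem exists_norm_eq_one_apply_eq_zero [FiniteDimensional ℝ X] (f : X →L[ℝ] ℝ) :
    ∃ x : X, ‖x‖ = 1 ∧ f x = 0 := by
  obtain ⟨x, hx, hx0⟩ := Submodule.exists_mem_ne_zero_of_ne_bot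
    (LinearMap.ker_ne_bot_of_finrank_lt (f := (f : X →ₗ[ℝ] ℝ)) (by simp [hdim]))
  exact ⟨(‖x‖⁻¹ : ℝ) • x, norm_smul_inv_norm hx0, by simpa using Or.inr hx⟩

theorem IsNormingFunctional.apply_ne_zero_of_apply_eq_zero {u v x : X} {f g : X →L[ℝ] ℝ}
    (hf : IsNormingFunctional u f) (hg : IsNormingFunctional v g) (hu : ‖u‖ = 1)
    (hv : ‖v‖ = 1) (hgf : g u * f v ≠ 1) (hx : x ≠ 0) (hfx : f x = 0) : g x ≠ 0 := by
  intro hgx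
  have hux := linearIndependent_pair_of_apply (f : X →ₗ[ℝ] ℝ) (x := u)
    (by simp [hf.2, hu]) (by simpa) hx
  obtain ⟨a, b, hab⟩ := exists_eq_smul_add_smul hdim hux v
  have hfv : f v = a := by simpa [hfx, hf.2, hu] using congrArg f hab
  have hgv : 1 = a * g u := by simpa [hgx, hg.2, hv] using congrArg g hab
  exact hgf (by rw [hfv, mul_comm, ← hgv])

end Plane

def OuterDistortionEqOne (X : Type*) [NormedAddCommGroup X] [NormedSpace ℝ X] : Prop :=
  ∀ x y : X, ‖x‖ = 1 → ‖y‖ = 1 → LinearIndependent ℝ ![x, y] →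
    ∀ (c : X) (r : ℝ), 0 < r → ∀ α β : ℝ, 0 < α → 0 < β →
      ‖β • x - c‖ = r → ‖α • y - c‖ = r →
      (∀ t : ℝ, r ≤ ‖t • x - c‖) → (∀ t : ℝ, r ≤ ‖t • y - c‖) → α = β

section Euclidean

variable {B : X →ₗ[ℝ] X →ₗ[ℝ] ℝ} (hBsymm : ∀ u v : X, B u v = B v u)
  (hB : ∀ v : X, B v v = ‖v‖ ^ 2)
include hBsymm hB

theorem norm_smul_sub_sq_eq {w : X} (hw : ‖w‖ = 1) (c : X) (t : ℝ) :
    ‖t • w - c‖ ^ 2 = (t - B w c) ^ 2 + (‖c‖ ^ 2 - B w c ^ 2) := by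
  rw [← hB, ← hB c]
  simp only [map_sub, map_smul, LinearMap.sub_apply, LinearMap.smul_apply, smul_eq_mul]
  rw [hB w, hw, hBsymm c w]
  ring

theorem sq_eq_of_tangent {w c : X} (hw : ‖w‖ = 1) {r s : ℝ} (hs : ‖s • w - c‖ = r)
    (hmin : ∀ t : ℝ, r ≤ ‖t • w - c‖) : s ^ 2 = ‖c‖ ^ 2 - r ^ 2 := by
  have hr : 0 ≤ r := hs ▸ norm_nonneg _
  have hs' := norm_smul_sub_sq_eq hBsymm hB hw c s
  have hmin' := norm_smul_sub_sq_eq hBsymm hB hw c (B w c)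
  rw [hs] at hs'
  have hle : r ^ 2 ≤ ‖B w c • w - c‖ ^ 2 := pow_le_pow_left₀ hr (hmin _) 2
  have hsB : s = B w c := sub_eq_zero.mp ((pow_eq_zero_iff two_ne_zero).mp
    (le_antisymm (by linarith) (sq_nonneg _)))
  rw [hsB] at hs' ⊢
  linarith

theorem outerDistortionEqOne_of_bilin : OuterDistortionEqOne X := by
  intro x y hx hy _ c r _ α β hα hβ hxc hyc hxmin hymin
  refine (pow_left_inj₀ hα.le hβ.le two_ne_zero).mp ?_
  rw [sq_eq_of_tangent hBsymm hB hy hyc hymin, sq_eq_of_tangent hBsymm hB hx hxc hxmin]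

end Euclidean

section OuterDistortion

variable (hX : OuterDistortionEqOne X)
include hX

theorem abs_eq_abs_of_sub_eq {u w x y : X} {f g : X →L[ℝ] ℝ} (hf : IsNormingFunctional u f)
    (hg : IsNormingFunctional w g) (hu : ‖u‖ = 1) (hw : ‖w‖ = 1) (hx : ‖x‖ = 1) (hy : ‖y‖ = 1)
    (hfx : f x = 0) (hgx : g x ≠ 0) (hgy : g y = 0) {p q : ℝ} (hp : p ≠ 0) (hq : q ≠ 0)
    (h : u - w = p • x + q • y) : |p| = |q| := by
  set x' := (p / |p|) • x
  set y' := (-q / |q|) • y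
  set c := p • x - u
  have hpx : |p| • x' = p • x := by
    rw [smul_smul, mul_div_cancel₀ _ (abs_ne_zero.mpr hp)]
  have hqy : |q| • y' = -(q • y) := by
    rw [smul_smul, mul_div_cancel₀ _ (abs_ne_zero.mpr hq), neg_smul]
  have hw' : w = u - p • x - q • y := by rw [sub_sub, ← h, sub_sub_cancel]
  have hunit {a : ℝ} {z : X} (ha : a ≠ 0) (hz : ‖z‖ = 1) : ‖(a / |a|) • z‖ = 1 := by
    rw [norm_smul, hz, mul_one, Real.norm_eq_abs, abs_div, abs_abs, div_self (abs_ne_zero.mpr ha)]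
  have hx'y' : LinearIndependent ℝ ![x', y'] :=
    linearIndependent_pair_of_apply (g : X →ₗ[ℝ] ℝ) (by simp [x', hgx, hp])
      (by simp [y', hgy]) (by simp [y', hq, ← norm_ne_zero_iff, hy])
  -- the unit circle centred at `c` touches `ℝ x'` at `c + u` and `ℝ y'` at `c + w`
  refine (hX x' y' (hunit hp hx) (by simpa [y', neg_div] using hunit hq hy) hx'y' c 1 one_pos
    |q| |p| (abs_pos.mpr hq) (abs_pos.mpr hp) (by simp [hpx, c, hu])
    (by rw [hqy, ← hw, hw']; congr 1; simp only [c]; abel) (fun t ↦ ?_) (fun t ↦ ?_)).symm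
  · have := hf.norm_le_norm_add (z := t • x' - p • x) (by simp [x', hfx])
    rw [hu] at this
    convert this using 2
    simp only [c]
    abel
  · have := hg.norm_le_norm_add (z := t • y' + q • y) (by simp [y', hgy])
    rw [hw] at this
    convert this using 2
    rw [hw']
    simp only [c]
    abel

variable [FiniteDimensional ℝ X] (hdim : finrank ℝ X = 2) [StrictConvexSpace ℝ X]
include hdim

theorem IsNormingFunctional.apply_comm_of_ne {u v : X} {f g : X →L[ℝ] ℝ}
    (hf : IsNormingFunctional u f) (hg : IsNormingFunctional v g) (hu : ‖u‖ = 1) (hv : ‖v‖ = 1)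
    (huv : u ≠ v) (huv' : u ≠ -v) : g u = f v := by
  obtain ⟨ha₁, ha₂⟩ := abs_lt.mp (hg.abs_apply_lt_one hv hu huv huv')
  obtain ⟨hb₁, hb₂⟩ := abs_lt.mp
    (hf.abs_apply_lt_one hu hv huv.symm fun h ↦ huv' (by rw [h, neg_neg]))
  have hgf : g u * f v ≠ 1 := by nlinarith
  obtain ⟨x, hx, hfx⟩ := exists_norm_eq_one_apply_eq_zero hdim f
  obtain ⟨y, hy, hgy⟩ := exists_norm_eq_one_apply_eq_zero hdim g
  have hx0 : x ≠ 0 := by rintro rfl; simp at hx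
  have hy0 : y ≠ 0 := by rintro rfl; simp at hy
  have hgx := hf.apply_ne_zero_of_apply_eq_zero hdim hg hu hv hgf hx0 hfx
  have hfy := hg.apply_ne_zero_of_apply_eq_zero hdim hf hv hu (by rwa [mul_comm]) hy0 hgy
  have hxy := linearIndependent_pair_of_apply (g : X →ₗ[ℝ] ℝ) (by simpa) (by simpa) hy0
  obtain ⟨p, q, hpq⟩ := exists_eq_smul_add_smul hdim hxy (u - v)
  obtain ⟨p', q', hpq'⟩ := exists_eq_smul_add_smul hdim hxy (u + v)
  have e₁ : g u - 1 = p * g x := by simpa [hgy, hg.2, hv] using congrArg g hpq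
  have e₂ : 1 - f v = q * f y := by simpa [hfx, hf.2, hu] using congrArg f hpq
  have e₃ : g u + 1 = p' * g x := by simpa [hgy, hg.2, hv] using congrArg g hpq'
  have e₄ : 1 + f v = q' * f y := by simpa [hfx, hf.2, hu] using congrArg f hpq'
  have hpq₁ := abs_eq_abs_of_sub_eq hX hf hg hu hv hx hy hfx hgx hgy
    (by rintro rfl; linarith) (by rintro rfl; linarith) hpq
  have hpq₂ := abs_eq_abs_of_sub_eq hX (p := p') (q := q') hf hg.neg hu (by rwa [norm_neg])
    hx hy hfx (by simpa) (by simp [hgy]) (by rintro rfl; linarith) (by rintro rfl; linarith)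
    (by rwa [sub_neg_eq_add])
  rw [← sq_eq_sq_iff_abs_eq_abs] at hpq₁ hpq₂
  have E₁ : (g u - 1) ^ 2 * f y ^ 2 = (1 - f v) ^ 2 * g x ^ 2 := by
    rw [e₁, e₂]; linear_combination g x ^ 2 * f y ^ 2 * hpq₁
  have E₂ : (g u + 1) ^ 2 * f y ^ 2 = (1 + f v) ^ 2 * g x ^ 2 := by
    rw [e₃, e₄]; linear_combination g x ^ 2 * f y ^ 2 * hpq₂
  have key : f y ^ 2 * ((f v - g u) * (1 - g u * f v)) = 0 := by
    linear_combination f v / 2 * (E₁ + E₂) - (1 + f v ^ 2) / 4 * (E₂ - E₁)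
  have := (mul_eq_zero.mp key).resolve_left (pow_ne_zero 2 hfy)
  exact (sub_eq_zero.mp ((mul_eq_zero.mp this).resolve_right (sub_ne_zero.mpr hgf.symm))).symm

theorem IsNormingFunctional.apply_comm {u v : X} {f g : X →L[ℝ] ℝ} (hf : IsNormingFunctional u f)
    (hg : IsNormingFunctional v g) (hu : ‖u‖ = 1) (hv : ‖v‖ = 1) : g u = f v := by
  by_cases huv : u = v
  · subst huv
    rw [hf.2, hg.2]
  by_cases huv' : u = -v
  · subst huv'
    have hfv := hf.2
    rw [map_neg, norm_neg] at hfv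
    rw [map_neg, hg.2, ← hfv, neg_neg]
  exact hf.apply_comm_of_ne hX hdim hg hu hv huv huv'

theorem IsNormingFunctional.norm_mul_apply_comm {a b : X} {f g : X →L[ℝ] ℝ}
    (hf : IsNormingFunctional a f) (hg : IsNormingFunctional b g) : ‖a‖ * f b = ‖b‖ * g a := by
  rcases eq_or_ne a 0 with rfl | ha
  · simp
  rcases eq_or_ne b 0 with rfl | hb
  · simp
  have hab := (hf.smul (inv_nonneg.mpr (norm_nonneg a))).apply_comm hX hdim
    (hg.smul (inv_nonneg.mpr (norm_nonneg b))) (norm_smul_inv_norm ha) (norm_smul_inv_norm hb)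
  simp only [map_smul, smul_eq_mul] at hab
  field_simp at hab
  linarith

theorem exists_bilin_of_outerDistortionEqOne :
    ∃ B : X →ₗ[ℝ] X →ₗ[ℝ] ℝ, (∀ u v : X, B u v = B v u) ∧ ∀ v : X, B v v = ‖v‖ ^ 2 := by
  have := Module.nontrivial_of_finrank_eq_succ hdim
  choose F hF using fun a : X ↦ exists_dual_vector' ℝ a
  have hsymm (a b : X) : ‖a‖ * F a b = ‖b‖ * F b a :=
    IsNormingFunctional.norm_mul_apply_comm hX hdim (hF a) (hF b)
  refine ⟨LinearMap.mk₂ ℝ (fun a b ↦ ‖a‖ * F a b) (fun a₁ a₂ b ↦ ?_) (fun c a b ↦ ?_)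
    (fun a b₁ b₂ ↦ by simp [mul_add]) (fun c a b ↦ by simp [mul_left_comm]), hsymm,
    fun v ↦ by simp [(hF v).2, sq]⟩
  · rw [hsymm, hsymm a₁, hsymm a₂, map_add, mul_add]
  · rw [hsymm, hsymm a, map_smul, smul_eq_mul, smul_eq_mul, mul_left_comm]

end OuterDistortion

theorem stmt_6_general [FiniteDimensional ℝ X] (hdim : Module.finrank ℝ X = 2)
    [StrictConvexSpace ℝ X] :
    (∃ B : X →ₗ[ℝ] X →ₗ[ℝ] ℝ, (∀ u v : X, B u v = B v u) ∧ ∀ v : X, B v v = ‖v‖ ^ 2) ↔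
    (∀ x y : X, ‖x‖ = 1 → ‖y‖ = 1 → LinearIndependent ℝ ![x, y] →
      ∀ (c : X) (r : ℝ), 0 < r → ∀ α β : ℝ, 0 < α → 0 < β →
        ‖β • x - c‖ = r → ‖α • y - c‖ = r →
        (∀ t : ℝ, r ≤ ‖t • x - c‖) → (∀ t : ℝ, r ≤ ‖t • y - c‖) → α = β) :=
  ⟨fun ⟨_, hBsymm, hB⟩ ↦ outerDistortionEqOne_of_bilin hBsymm hB,
    fun hX ↦ exists_bilin_of_outerDistortionEqOne hX hdim⟩

theorem stmt_6 [FiniteDimensional ℝ X] (hdim : Module.finrank ℝ X = 2)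
    [StrictConvexSpace ℝ X] (hsm : SmoothNormedSpace X) :
    (∃ B : X →ₗ[ℝ] X →ₗ[ℝ] ℝ, (∀ u v : X, B u v = B v u) ∧ ∀ v : X, B v v = ‖v‖ ^ 2) ↔
    (∀ x y : X, ‖x‖ = 1 → ‖y‖ = 1 → LinearIndependent ℝ ![x, y] →
      ∀ (c : X) (r : ℝ), 0 < r → ∀ α β : ℝ, 0 < α → 0 < β →
        ‖β • x - c‖ = r → ‖α • y - c‖ = r →
        (∀ t : ℝ, r ≤ ‖t • x - c‖) → (∀ t : ℝ, r ≤ ‖t • y - c‖) → α = β) :=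
  stmt_6_general hdim
end

section
/- Let X be a smooth Minkowski plane. Then X is Radon (Birkhoff orthogonality is symmetric) if and only if cm(x,y)·cm(y,x) ≥ 0 for all nonzero x, y ∈ X, i.e. if and only if f_x(y)·f_y(x) ≥ 0 for all nonzero x, y ∈ X. -/
/-!
A norming functional `f` of `x` is a subgradient of the norm at `x`:
`‖x‖ + t * f y ≤ ‖x + t • y‖`. By Hahn–Banach, `x ⊣_B y` holds exactly when some norming
functional of `x` vanishes at `y`; in a smooth space this is the functional `F x`, so
`x ⊣_B y ↔ F x y = 0`.

If `X` is Radon and `z := ‖x‖ • y - F x y • x`, then `F x z = 0`, so `z ⊣_B x` and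
`‖x‖ ‖y‖ - F x y * F y x = F y z ≤ ‖z‖ ≤ ‖z + F x y • x‖ = ‖x‖ ‖y‖`.
Conversely, if `u ⊣_B v` then `F u (v + s • u) = s ‖u‖`, so the sign condition says that
the subgradient `F (v + s • u) u` of `s ↦ ‖v + s • u‖` has the sign of `s`. This function is
therefore monotone on each side of `0`, and by continuity it is minimal at `0`, i.e. `v ⊣_B u`.
-/

open Filter Topology

variable {X : Type*} [NormedAddCommGroup X] [NormedSpace ℝ X]

/-- Birkhoff orthogonality: `x ⊣_B y` iff `‖x + t • y‖ ≥ ‖x‖` for all real `t`. -/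
def BirkhoffOrth (x y : X) : Prop := ∀ t : ℝ, ‖x‖ ≤ ‖x + t • y‖

theorem IsNormingFunctional.of_norm_le_one {x : X} {f : X →L[ℝ] ℝ} (hx : x ≠ 0)
    (hf : ‖f‖ ≤ 1) (hfx : f x = ‖x‖) : IsNormingFunctional x f := by
  refine ⟨le_antisymm hf ?_, hfx⟩
  have hle : ‖x‖ ≤ ‖f‖ * ‖x‖ := by simpa [hfx] using f.le_opNorm x
  exact one_le_of_le_mul_right₀ (norm_pos_iff.mpr hx) (by simpa using hle)

theorem IsNormingFunctional.apply_le {x : X} {f : X →L[ℝ] ℝ} (hf : IsNormingFunctional x f)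
    (w : X) : f w ≤ ‖w‖ :=
  calc f w ≤ ‖f w‖ := le_abs_self _
    _ ≤ ‖f‖ * ‖w‖ := f.le_opNorm w
    _ = ‖w‖ := by rw [hf.1, one_mul]

theorem IsNormingFunctional.norm_add_mul_le {x : X} {f : X →L[ℝ] ℝ}
    (hf : IsNormingFunctional x f) (y : X) (t : ℝ) : ‖x‖ + t * f y ≤ ‖x + t • y‖ := by
  simpa [hf.2] using hf.apply_le (x + t • y)

theorem IsNormingFunctional.birkhoffOrth {x y : X} {f : X →L[ℝ] ℝ}
    (hf : IsNormingFunctional x f) (hfy : f y = 0) : BirkhoffOrth x y := fun t => by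
  simpa [hfy] using hf.norm_add_mul_le y t

/-- Hahn–Banach applied to the image of `x` in the quotient `X ⧸ ℝ ∙ y`, whose norm is the
distance from `x` to the line `ℝ ∙ y`. -/
theorem BirkhoffOrth.exists_isNormingFunctional {x y : X} (hx : x ≠ 0) (h : BirkhoffOrth x y) :
    ∃ f : X →L[ℝ] ℝ, IsNormingFunctional x f ∧ f y = 0 := by
  set S := ℝ ∙ y
  have hnorm : ‖(Submodule.Quotient.mk x : X ⧸ S)‖ = ‖x‖ := by
    refine le_antisymm (Submodule.Quotient.norm_mk_le S x) ?_
    change ‖x‖ ≤ ‖(x : X ⧸ S.toAddSubgroup)‖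
    rw [QuotientAddGroup.norm_mk, Submodule.coe_toAddSubgroup,
      Metric.le_infDist ⟨0, S.zero_mem⟩]
    rintro _ hz
    obtain ⟨t, rfl⟩ := Submodule.mem_span_singleton.mp hz
    simpa [dist_eq_norm, sub_eq_add_neg, ← neg_smul] using h (-t)
  obtain ⟨g, hg, hgx⟩ := exists_dual_vector ℝ (S.mkQ x) (by simpa [hnorm] using hx)
  refine ⟨g.comp S.mkQL, .of_norm_le_one hx ?_ (by simpa [hnorm] using hgx), ?_⟩
  · refine ContinuousLinearMap.opNorm_le_bound _ zero_le_one fun w => ?_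
    calc ‖g (S.mkQ w)‖ ≤ ‖g‖ * ‖S.mkQ w‖ := g.le_opNorm _
      _ ≤ 1 * ‖w‖ := by gcongr; exacts [hg.le, Submodule.Quotient.norm_mk_le S w]
  · simp [S, (Submodule.Quotient.mk_eq_zero S).mpr (Submodule.mem_span_singleton_self y)]

theorem SmoothNormedSpace.apply_eq_zero_of_birkhoffOrth (hsm : SmoothNormedSpace X)
    {x y : X} {f : X →L[ℝ] ℝ} (hx : x ≠ 0) (hf : IsNormingFunctional x f)
    (h : BirkhoffOrth x y) : f y = 0 := by
  obtain ⟨g, hg, hgy⟩ := h.exists_isNormingFunctional hx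
  rwa [(hsm x hx).unique hf hg]

theorem apply_mul_apply_nonneg_of_birkhoffOrth_symm
    (hR : ∀ u v : X, BirkhoffOrth u v → BirkhoffOrth v u) {x y : X} {f g : X →L[ℝ] ℝ}
    (hf : IsNormingFunctional x f) (hg : IsNormingFunctional y g) : 0 ≤ f y * g x := by
  set z := ‖x‖ • y - f y • x
  have hzx : BirkhoffOrth z x := hR x z (hf.birkhoffOrth (by simp [z, hf.2, mul_comm]))
  have hgz : g z = ‖x‖ * ‖y‖ - f y * g x := by simp [z, hg.2]
  have hz : ‖z + f y • x‖ = ‖x‖ * ‖y‖ := by simp [z, norm_smul]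
  have := hg.apply_le z
  linarith [hzx (f y)]

section SignCondition

variable {F : X → X →L[ℝ] ℝ} (hF : ∀ x : X, x ≠ 0 → IsNormingFunctional x (F x))
  (hsign : ∀ x y : X, x ≠ 0 → y ≠ 0 → 0 ≤ F x y * F y x)
include hF hsign

theorem norm_add_smul_le_of_sign {u v : X} (hu : u ≠ 0) (huv : F u v = 0) {s t : ℝ}
    (hs : s ≠ 0) (hst : 0 ≤ s * (t - s)) : ‖v + s • u‖ ≤ ‖v + t • u‖ := by
  set w := v + s • u
  have hFuw : F u w = s * ‖u‖ := by simp [w, huv, (hF u hu).2]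
  have hu0 : 0 < ‖u‖ := norm_pos_iff.mpr hu
  have hw : w ≠ 0 := by
    intro hw0
    rw [hw0, map_zero] at hFuw
    exact mul_ne_zero hs hu0.ne' hFuw.symm
  have hsw : 0 ≤ s * F w u := by
    have := hsign u w hu hw
    rw [hFuw] at this
    nlinarith
  have hsub : 0 ≤ (t - s) * F w u := by
    have hs2 : 0 < s * s := mul_self_pos.mpr hs
    refine nonneg_of_mul_nonneg_right ?_ hs2
    nlinarith [mul_nonneg hst hsw]
  have hvt : v + t • u = w + (t - s) • u := by simp only [w, sub_smul]; abel
  rw [hvt]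
  linarith [(hF w hw).norm_add_mul_le u (t - s)]

theorem birkhoffOrth_symm_of_sign (hsm : SmoothNormedSpace X) {u v : X}
    (h : BirkhoffOrth u v) : BirkhoffOrth v u := by
  intro t
  rcases eq_or_ne u 0 with rfl | hu
  · simp
  rcases eq_or_ne t 0 with rfl | ht
  · simp
  have huv := hsm.apply_eq_zero_of_birkhoffOrth hu (hF u hu) h
  have hcont : Tendsto (fun ε : ℝ => ‖v + (ε * t) • u‖) (𝓝[>] 0) (𝓝 ‖v‖) := by
    have : Continuous fun ε : ℝ => ‖v + (ε * t) • u‖ := by fun_prop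
    simpa using (this.tendsto 0).mono_left nhdsWithin_le_nhds
  refine le_of_tendsto hcont ?_
  filter_upwards [Ioo_mem_nhdsGT zero_lt_one] with ε ⟨hε0, hε1⟩
  refine norm_add_smul_le_of_sign hF hsign hu huv (by positivity) ?_
  rw [show ε * t * (t - ε * t) = ε * (1 - ε) * (t * t) by ring]
  exact mul_nonneg (mul_nonneg hε0.le (by linarith)) (mul_self_nonneg t)

end SignCondition

theorem stmt_12_general
    (hsm : SmoothNormedSpace X)
    (F : X → X →L[ℝ] ℝ) (hF : ∀ x : X, x ≠ 0 → IsNormingFunctional x (F x)) :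
    (∀ u v : X, BirkhoffOrth u v → BirkhoffOrth v u) ↔
    (∀ x y : X, x ≠ 0 → y ≠ 0 → 0 ≤ (F x y / ‖y‖) * (F y x / ‖x‖)) := by
  have hcos : ∀ x y : X, x ≠ 0 → y ≠ 0 →
      (0 ≤ (F x y / ‖y‖) * (F y x / ‖x‖) ↔ 0 ≤ F x y * F y x) := fun x y hx hy => by
    rw [div_mul_div_comm, le_div_iff₀ (by positivity), zero_mul]
  constructor
  · intro hR x y hx hy
    exact (hcos x y hx hy).mpr
      (apply_mul_apply_nonneg_of_birkhoffOrth_symm hR (hF x hx) (hF y hy))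
  · intro hsign u v
    exact birkhoffOrth_symm_of_sign hF
      (fun x y hx hy => (hcos x y hx hy).mp (hsign x y hx hy)) hsm

theorem stmt_12 [FiniteDimensional ℝ X] (hdim : Module.finrank ℝ X = 2)
    (hsm : SmoothNormedSpace X)
    (F : X → X →L[ℝ] ℝ) (hF : ∀ x : X, x ≠ 0 → IsNormingFunctional x (F x)) :
    (∀ u v : X, BirkhoffOrth u v → BirkhoffOrth v u) ↔
    (∀ x y : X, x ≠ 0 → y ≠ 0 → 0 ≤ (F x y / ‖y‖) * (F y x / ‖x‖)) :=
  stmt_12_general hsm F hF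
end

section
/- Let X be a smooth Minkowski plane. Then X is Radon (Birkhoff orthogonality is symmetric) if and only if the function g(x,y) := sgn( lim_{t→0} (‖x + t·y‖ − ‖x‖)/t ) is symmetric on pairs of nonzero vectors, i.e. g(x,y) = g(y,x) for all nonzero x, y ∈ X, where sgn denotes the usual sign function. -/
open scoped Topology

variable {X : Type*} [NormedAddCommGroup X] [NormedSpace ℝ X]

/-!
For `x ≠ 0`, the derivative at `0` of the convex function `t ↦ ‖x + t • y‖`, when it exists,
is `f y` for every norming functional `f` of `x`, and it vanishes exactly when `x ⊣_B y`.

If Birkhoff orthogonality is symmetric, write `y = α • x + w` with `f w = 0`. Then `x ⊣_B w`,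
hence `w ⊣_B x`, so `s ↦ ‖w + s • x‖` is convex and minimal at `0`; its derivative at `α`, which
is the derivative of `t ↦ ‖y + t • x‖` at `0`, is therefore nonnegative when `f y ≥ 0`. Applying
this to `(x, y)`, `(y, x)`, `(x, -y)` and `(-y, x)` shows that the two derivatives have the same
sign.

Conversely, in a smooth space the one-sided derivative `y ↦ lim_{t → 0⁺} (‖x + t • y‖ - ‖x‖) / t`
is sublinear, so Hahn–Banach yields norming functionals of `x` whose value at `y` is the right,
respectively the left, derivative; uniqueness of the norming functional forces these to agree.
Hence all directional derivatives of the norm exist, and symmetry of their signs at the value `0`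
is exactly the symmetry of Birkhoff orthogonality.
-/

open Set Filter

theorem ConvexOn.hasDerivAt_nonneg_of_isMinOn {φ : ℝ → ℝ} {a b d : ℝ}
    (hφ : ConvexOn ℝ univ φ) (hmin : IsMinOn φ univ a) (hab : a ≤ b)
    (hd : HasDerivAt φ d b) : 0 ≤ d := by
  rcases hab.eq_or_lt with rfl | hab
  · exact ((hmin.isLocalMin univ_mem).hasDerivAt_eq_zero hd).ge
  · calc 0 ≤ slope φ a b := by
          rw [slope_def_field]
          exact div_nonneg (sub_nonneg.2 (hmin (mem_univ b))) (sub_nonneg.2 hab.le)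
      _ ≤ d := hφ.slope_le_of_hasDerivAt (mem_univ a) (mem_univ b) hab hd

theorem ConvexOn.isMinOn_of_hasDerivAt_zero {φ : ℝ → ℝ} {a : ℝ} (hφ : ConvexOn ℝ univ φ)
    (hd : HasDerivAt φ 0 a) : IsMinOn φ univ a :=
  hφ.isMinOn_of_rightDeriv_eq_zero (by simp)
    (hd.hasDerivWithinAt.derivWithin (uniqueDiffWithinAt_Ioi a))

theorem convexOn_norm_add_smul (x y : X) : ConvexOn ℝ univ (fun t : ℝ => ‖x + t • y‖) := by
  have h : (fun t : ℝ => ‖x + t • y‖) = (‖·‖) ∘ AffineMap.lineMap x (x + y) := by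
    ext t
    simp [AffineMap.lineMap_apply, add_comm]
  rw [h]
  exact convexOn_univ_norm.comp_affineMap _

theorem birkhoffOrth_iff_isMinOn {x y : X} :
    BirkhoffOrth x y ↔ IsMinOn (fun t : ℝ => ‖x + t • y‖) univ 0 := by
  simp [BirkhoffOrth, IsMinOn, IsMinFilter]

theorem hasLineDerivAt_norm_iff_tendsto {x y : X} {L : ℝ} :
    HasLineDerivAt ℝ (‖·‖) L x y ↔
      Tendsto (fun t : ℝ => (‖x + t • y‖ - ‖x‖) / t) (𝓝[≠] (0 : ℝ)) (𝓝 L) := by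
  rw [hasLineDerivAt_iff_tendsto_slope_zero]
  simp only [smul_eq_mul, div_eq_inv_mul]

theorem BirkhoffOrth.hasLineDerivAt_eq_zero {x y : X} {L : ℝ} (h : BirkhoffOrth x y)
    (hL : HasLineDerivAt ℝ (‖·‖) L x y) : L = 0 :=
  ((birkhoffOrth_iff_isMinOn.1 h).isLocalMin univ_mem).hasDerivAt_eq_zero hL

theorem birkhoffOrth_of_hasLineDerivAt_zero {x y : X} (h : HasLineDerivAt ℝ (‖·‖) 0 x y) :
    BirkhoffOrth x y :=
  birkhoffOrth_iff_isMinOn.2 ((convexOn_norm_add_smul x y).isMinOn_of_hasDerivAt_zero h)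

namespace IsNormingFunctional

variable {x : X} {f : X →L[ℝ] ℝ}

theorem apply_le_norm (hf : IsNormingFunctional x f) (w : X) : f w ≤ ‖w‖ := by
  simpa [hf.1] using (le_abs_self (f w)).trans (f.le_opNorm w)

theorem birkhoffOrth_s13 {y : X} (hf : IsNormingFunctional x f) (hy : f y = 0) :
    BirkhoffOrth x y := fun t => by
  simpa [hf.2, hy] using hf.apply_le_norm (x + t • y)

theorem hasLineDerivAt_eq {y : X} {L : ℝ} (hf : IsNormingFunctional x f)
    (hL : HasLineDerivAt ℝ (‖·‖) L x y) : L = f y := by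
  have hmin : IsLocalMin (fun t : ℝ => ‖x + t • y‖ - t * f y) 0 :=
    Eventually.of_forall fun t => by
      simpa [hf.2, le_sub_iff_add_le] using hf.apply_le_norm (x + t • y)
  have := hmin.hasDerivAt_eq_zero (hL.sub (hasDerivAt_mul_const (f y)))
  linarith

end IsNormingFunctional

theorem Real.sign_eq_sign_of_iff {a b : ℝ} (h₁ : 0 ≤ a ↔ 0 ≤ b) (h₂ : a ≤ 0 ↔ b ≤ 0) :
    Real.sign a = Real.sign b := by
  simp only [Real.sign, ← not_le, h₁, h₂]

theorem HasLineDerivAt.norm_at_neg {x y : X} {L : ℝ} (h : HasLineDerivAt ℝ (‖·‖) L x y) :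
    HasLineDerivAt ℝ (‖·‖) (-L) (-x) y := by
  have h' := h.smul (-1)
  rw [neg_one_smul, neg_one_smul] at h'
  unfold HasLineDerivAt at *
  convert h' using 1
  ext t
  show ‖-x + t • y‖ = ‖x + t • -y‖
  rw [← norm_neg]
  congr 1
  module

theorem hasLineDerivAt_norm_nonneg_of_radon (hR : ∀ u v : X, BirkhoffOrth u v → BirkhoffOrth v u)
    {x y : X} {L M : ℝ} (hx : x ≠ 0)
    (hL : HasLineDerivAt ℝ (‖·‖) L x y) (hM : HasLineDerivAt ℝ (‖·‖) M y x) (hL0 : 0 ≤ L) :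
    0 ≤ M := by
  obtain ⟨f, hf1, hfx⟩ := exists_dual_vector ℝ x (norm_ne_zero_iff.2 hx)
  have hf : IsNormingFunctional x f := ⟨hf1, by exact_mod_cast hfx⟩
  set α := f y / ‖x‖
  have hα : 0 ≤ α := div_nonneg (hf.hasLineDerivAt_eq hL ▸ hL0) (norm_nonneg x)
  have hw : BirkhoffOrth (y - α • x) x :=
    hR _ _ (hf.birkhoffOrth_s13 (by simp [α, hf.2, norm_ne_zero_iff.2 hx]))
  have hmin : IsMinOn (fun t : ℝ => ‖y + t • x‖) univ (-α) := fun t _ => by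
    have h := hw (t + α)
    rwa [show y - α • x + (t + α) • x = y + t • x by module, sub_eq_add_neg, ← neg_smul] at h
  exact (convexOn_norm_add_smul y x).hasDerivAt_nonneg_of_isMinOn hmin (neg_nonpos.2 hα) hM

theorem sign_hasLineDerivAt_norm_eq_of_radon
    (hR : ∀ u v : X, BirkhoffOrth u v → BirkhoffOrth v u) {x y : X} {L M : ℝ} (hx : x ≠ 0)
    (hy : y ≠ 0) (hL : HasLineDerivAt ℝ (‖·‖) L x y) (hM : HasLineDerivAt ℝ (‖·‖) M y x) :
    Real.sign L = Real.sign M := by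
  have hL' : HasLineDerivAt ℝ (‖·‖) (-L) x (-y) := by simpa using hL.smul (-1)
  have hM' : HasLineDerivAt ℝ (‖·‖) (-M) (-y) x := hM.norm_at_neg
  refine Real.sign_eq_sign_of_iff ⟨hasLineDerivAt_norm_nonneg_of_radon hR hx hL hM,
    hasLineDerivAt_norm_nonneg_of_radon hR hy hM hL⟩ ?_
  rw [← neg_nonneg, ← neg_nonneg (a := M)]
  exact ⟨hasLineDerivAt_norm_nonneg_of_radon hR hx hL' hM',
    hasLineDerivAt_norm_nonneg_of_radon hR (neg_ne_zero.2 hy) hM' hL'⟩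

theorem exists_linearMap_le_of_sublinear {E : Type*} [AddCommGroup E] [Module ℝ E] {p : E → ℝ}
    (hp_smul : ∀ c : ℝ, 0 < c → ∀ w, p (c • w) = c * p w) (hp_add : ∀ v w, p (v + w) ≤ p v + p w)
    {y : E} (hy : y ≠ 0) {r : ℝ} (hr : r ∈ Icc (-p (-y)) (p y)) :
    ∃ g : E →ₗ[ℝ] ℝ, (∀ w, g w ≤ p w) ∧ g y = r := by
  have hp_zero : p 0 = 0 := by
    have h := hp_smul 2 two_pos 0
    rw [smul_zero] at h
    linarith
  have hr_smul : ∀ c : ℝ, c * r ≤ p (c • y) := by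
    intro c
    rcases lt_trichotomy c 0 with hc | rfl | hc
    · rw [show c • y = (-c) • (-y) by module, hp_smul _ (neg_pos.2 hc)]
      nlinarith [hr.1]
    · simp [hp_zero]
    · rw [hp_smul c hc]
      exact mul_le_mul_of_nonneg_left hr.2 hc.le
  obtain ⟨g, hg_ext, hg_le⟩ := exists_extension_of_le_sublinear
    (LinearPMap.mkSpanSingleton y r hy) p hp_smul hp_add (by
      rintro ⟨w, hw⟩
      obtain ⟨c, rfl⟩ := Submodule.mem_span_singleton.1 hw
      exact (LinearPMap.mkSpanSingleton'_apply _ _ _ c hw).trans_le (hr_smul c))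
  exact ⟨g, hg_le, (hg_ext _).trans (LinearPMap.mkSpanSingleton_apply ℝ ℝ hy r)⟩

noncomputable def normRightDeriv (x y : X) : ℝ :=
  derivWithin (fun t : ℝ => ‖x + t • y‖) (Ioi 0) 0

section normRightDeriv

variable (x : X)

theorem hasDerivWithinAt_normRightDeriv (y : X) :
    HasDerivWithinAt (fun t : ℝ => ‖x + t • y‖) (normRightDeriv x y) (Ioi 0) 0 :=
  (convexOn_norm_add_smul x y).hasDerivWithinAt_rightDeriv_of_mem_interior (by simp)

theorem tendsto_slope_normRightDeriv (y : X) :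
    Tendsto (fun t : ℝ => (‖x + t • y‖ - ‖x‖) / t) (𝓝[>] 0) (𝓝 (normRightDeriv x y)) := by
  refine ((hasDerivWithinAt_iff_tendsto_slope' (lt_irrefl (0 : ℝ))).1
    (hasDerivWithinAt_normRightDeriv x y)).congr fun t => ?_
  simp [slope_def_field]

theorem normRightDeriv_le_slope (y : X) {t : ℝ} (ht : 0 < t) :
    normRightDeriv x y ≤ (‖x + t • y‖ - ‖x‖) / t := by
  simpa [normRightDeriv, slope_def_field] using
    (convexOn_norm_add_smul x y).rightDeriv_le_slope (mem_univ 0) (mem_univ t) ht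
      (hasDerivWithinAt_normRightDeriv x y).differentiableWithinAt

theorem normRightDeriv_le_norm (y : X) : normRightDeriv x y ≤ ‖y‖ :=
  calc normRightDeriv x y ≤ (‖x + (1 : ℝ) • y‖ - ‖x‖) / 1 := normRightDeriv_le_slope x y one_pos
    _ ≤ ‖y‖ := by
      rw [one_smul, div_one]
      linarith [norm_add_le x y]

theorem normRightDeriv_neg_self_le : normRightDeriv x (-x) ≤ -‖x‖ := by
  simpa using normRightDeriv_le_slope x (-x) one_pos

theorem normRightDeriv_smul {c : ℝ} (hc : 0 < c) (y : X) :
    normRightDeriv x (c • y) = c * normRightDeriv x y := by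
  have h : HasDerivWithinAt (fun t : ℝ => ‖x + t • (c • y)‖) (normRightDeriv x y * c)
      (Ioi 0) 0 := by
    have hmul : HasDerivWithinAt (fun t : ℝ => t * c) c (Ioi 0) 0 := by
      simpa using (hasDerivWithinAt_id (0 : ℝ) (Ioi 0)).mul_const c
    have := (hasDerivWithinAt_normRightDeriv x y).comp_of_eq 0 hmul
      (fun t (ht : 0 < t) => mul_pos ht hc) (by simp)
    simpa [Function.comp_def, smul_smul] using this
  rw [normRightDeriv, h.derivWithin (uniqueDiffWithinAt_Ioi 0), mul_comm]

theorem normRightDeriv_add_le (y z : X) :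
    normRightDeriv x (y + z) ≤ normRightDeriv x y + normRightDeriv x z := by
  have hmid : normRightDeriv x ((1 / 2 : ℝ) • (y + z)) ≤
      (normRightDeriv x y + normRightDeriv x z) / 2 := by
    refine le_of_tendsto_of_tendsto (tendsto_slope_normRightDeriv x _)
      (((tendsto_slope_normRightDeriv x y).add (tendsto_slope_normRightDeriv x z)).div_const 2) ?_
    filter_upwards [self_mem_nhdsWithin] with t (ht : 0 < t)
    have hconv : ‖x + t • ((1 / 2 : ℝ) • (y + z))‖ ≤ (‖x + t • y‖ + ‖x + t • z‖) / 2 := by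
      have := norm_add_le (x + t • y) (x + t • z)
      rw [show x + t • ((1 / 2 : ℝ) • (y + z)) = (1 / 2 : ℝ) • ((x + t • y) + (x + t • z)) by
        module, norm_smul]
      norm_num
      linarith
    calc (‖x + t • ((1 / 2 : ℝ) • (y + z))‖ - ‖x‖) / t
        ≤ ((‖x + t • y‖ + ‖x + t • z‖) / 2 - ‖x‖) / t := by gcongr
      _ = ((‖x + t • y‖ - ‖x‖) / t + (‖x + t • z‖ - ‖x‖) / t) / 2 := by ring
  rw [normRightDeriv_smul x (by norm_num)] at hmid
  linarith

theorem normRightDeriv_zero : normRightDeriv x 0 = 0 := by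
  simp [normRightDeriv]

theorem hasLineDerivAt_norm_of_normRightDeriv_eq (y : X)
    (h : normRightDeriv x y = -normRightDeriv x (-y)) :
    HasLineDerivAt ℝ (‖·‖) (normRightDeriv x y) x y := by
  have hright := hasDerivWithinAt_normRightDeriv x y
  have hleft : HasDerivWithinAt (fun t : ℝ => ‖x + t • y‖) (normRightDeriv x y) (Iio 0) 0 := by
    have := (hasDerivWithinAt_normRightDeriv x (-y)).comp_of_eq 0
      (hasDerivWithinAt_neg (0 : ℝ) (Iio 0)) (fun t (ht : t < 0) => neg_pos.2 ht) neg_zero.symm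
    simpa [Function.comp_def, h] using this
  rw [hasDerivWithinAt_Ioi_iff_Ici] at hright
  rw [hasDerivWithinAt_Iio_iff_Iic] at hleft
  simpa [HasLineDerivAt] using (hleft.union hright)

end normRightDeriv

theorem exists_isNormingFunctional_apply_eq {x y : X} (hx : x ≠ 0) (hy : y ≠ 0) {r : ℝ}
    (hr : r ∈ Icc (-normRightDeriv x (-y)) (normRightDeriv x y)) :
    ∃ f : X →L[ℝ] ℝ, IsNormingFunctional x f ∧ f y = r := by
  obtain ⟨g, hg_le, hgy⟩ := exists_linearMap_le_of_sublinear
    (fun _ hc w => normRightDeriv_smul x hc w) (normRightDeriv_add_le x) hy hr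
  have hg_norm : ∀ w, g w ≤ ‖w‖ := fun w => (hg_le w).trans (normRightDeriv_le_norm x w)
  let f := g.mkContinuous 1 fun w => by
    rw [one_mul, Real.norm_eq_abs, abs_le]
    exact ⟨neg_le.1 (by simpa using hg_norm (-w)), hg_norm w⟩
  have hfx : f x = ‖x‖ := by
    refine le_antisymm (hg_norm x) ?_
    exact (by simpa using (hg_le (-x)).trans (normRightDeriv_neg_self_le x) : ‖x‖ ≤ g x)
  refine ⟨f, ⟨le_antisymm (g.mkContinuous_norm_le zero_le_one _) ?_, hfx⟩, hgy⟩
  have := f.le_opNorm x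
  rw [hfx, norm_norm] at this
  exact one_le_of_le_mul_right₀ (norm_pos_iff.2 hx) (by simpa using this)

theorem SmoothNormedSpace.lineDifferentiableAt_norm (hsm : SmoothNormedSpace X) {x : X}
    (hx : x ≠ 0) (y : X) : LineDifferentiableAt ℝ (‖·‖) x y := by
  rcases eq_or_ne y 0 with rfl | hy
  · exact lineDifferentiableAt_zero
  have hle : -normRightDeriv x (-y) ≤ normRightDeriv x y := by
    have := normRightDeriv_add_le x y (-y)
    rw [add_neg_cancel, normRightDeriv_zero] at this
    linarith
  obtain ⟨f₁, hf₁, hf₁y⟩ := exists_isNormingFunctional_apply_eq hx hy ⟨hle, le_rfl⟩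
  obtain ⟨f₂, hf₂, hf₂y⟩ := exists_isNormingFunctional_apply_eq hx hy ⟨le_rfl, hle⟩
  have heq : normRightDeriv x y = -normRightDeriv x (-y) := by
    rw [← hf₁y, ← hf₂y, (hsm x hx).unique hf₁ hf₂]
  exact (hasLineDerivAt_norm_of_normRightDeriv_eq x y heq).lineDifferentiableAt

theorem stmt_13_general (hsm : SmoothNormedSpace X) :
    (∀ u v : X, BirkhoffOrth u v → BirkhoffOrth v u) ↔
    (∀ x y : X, x ≠ 0 → y ≠ 0 → ∀ L M : ℝ,
      Filter.Tendsto (fun t : ℝ => (‖x + t • y‖ - ‖x‖) / t) (𝓝[≠] (0 : ℝ)) (𝓝 L) →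
      Filter.Tendsto (fun t : ℝ => (‖y + t • x‖ - ‖y‖) / t) (𝓝[≠] (0 : ℝ)) (𝓝 M) →
      Real.sign L = Real.sign M) := by
  refine ⟨fun hR x y hx hy L M hL hM => ?_, fun hsym u v huv => ?_⟩
  · exact sign_hasLineDerivAt_norm_eq_of_radon hR hx hy
      (hasLineDerivAt_norm_iff_tendsto.2 hL) (hasLineDerivAt_norm_iff_tendsto.2 hM)
  rcases eq_or_ne u 0 with rfl | hu
  · intro t
    simp
  rcases eq_or_ne v 0 with rfl | hv
  · intro t
    simp
  have hL := (hsm.lineDifferentiableAt_norm hu v).hasLineDerivAt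
  have hM := (hsm.lineDifferentiableAt_norm hv u).hasLineDerivAt
  have hsign := hsym u v hu hv _ _
    (hasLineDerivAt_norm_iff_tendsto.1 hL) (hasLineDerivAt_norm_iff_tendsto.1 hM)
  rw [huv.hasLineDerivAt_eq_zero hL, Real.sign_zero, eq_comm, Real.sign_eq_zero_iff] at hsign
  exact birkhoffOrth_of_hasLineDerivAt_zero (hsign ▸ hM)

theorem stmt_13 [FiniteDimensional ℝ X] (hdim : Module.finrank ℝ X = 2)
    (hsm : SmoothNormedSpace X) :
    (∀ u v : X, BirkhoffOrth u v → BirkhoffOrth v u) ↔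
    (∀ x y : X, x ≠ 0 → y ≠ 0 → ∀ L M : ℝ,
      Filter.Tendsto (fun t : ℝ => (‖x + t • y‖ - ‖x‖) / t) (𝓝[≠] (0 : ℝ)) (𝓝 L) →
      Filter.Tendsto (fun t : ℝ => (‖y + t • x‖ - ‖y‖) / t) (𝓝[≠] (0 : ℝ)) (𝓝 M) →
      Real.sign L = Real.sign M) :=
  stmt_13_general hsm
end

section
/- Let X be a smooth Minkowski plane with a fixed nondegenerate alternating bilinear form [·,·], and let γ : ℝ → X be a differentiable curve with ‖γ(a)‖ = 1 and [γ(a), γ'(a)] = 1 for all a (an area parameterization of the unit circle). Then ‖γ'(a)‖_a = 1 for all a; that is, the area parameterization of the unit circle is a parameterization by arc length in the antinorm. -/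
/-!
Let `f` be a norming functional of `γ a`. Since `‖γ‖ ≡ 1`, the function `t ↦ f (γ t)` is bounded
by `1 = f (γ a)`, so it is maximal at `a` and `f (γ' a) = 0`. Hence the functionals `[γ' a, ·]` and
`-f` agree on `γ a` and `γ' a`, which form a basis of the plane because `[γ a, γ' a] = 1`. The
antinorm of `γ' a` is the dual norm of `[γ' a, ·]`, i.e. `‖f‖ = 1`.
-/

variable {X : Type*} [NormedAddCommGroup X] [NormedSpace ℝ X]

/-- A nondegenerate alternating bilinear form. -/
def IsSymplecticForm (ω : X →ₗ[ℝ] X →ₗ[ℝ] ℝ) : Prop :=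
  (∀ v : X, ω v v = 0) ∧ ∀ v : X, (∀ u : X, ω v u = 0) → v = 0

/-- The antinorm associated to the form `ω`: `‖v‖_a = sup {|ω v u| : ‖u‖ = 1}`. -/
noncomputable def antinorm (ω : X →ₗ[ℝ] X →ₗ[ℝ] ℝ) (v : X) : ℝ :=
  sSup {r : ℝ | ∃ u : X, ‖u‖ = 1 ∧ r = |ω v u|}

theorem antinorm_eq_norm_toContinuousLinearMap [FiniteDimensional ℝ X]
    (ω : X →ₗ[ℝ] X →ₗ[ℝ] ℝ) (v : X) :
    antinorm ω v = ‖LinearMap.toContinuousLinearMap (ω v)‖ := by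
  rw [antinorm, ← ContinuousLinearMap.sSup_sphere_eq_norm]
  congr 1
  ext r
  simp [eq_comm]

theorem IsNormingFunctional.apply_deriv_eq_zero {γ : ℝ → X} {v : X} {a : ℝ} {f : X →L[ℝ] ℝ}
    (hf : IsNormingFunctional (γ a) f) (hmax : IsLocalMax (fun t => ‖γ t‖) a)
    (hγ : HasDerivAt γ v a) : f v = 0 := by
  have hfmax : IsLocalMax (fun t => f (γ t)) a := hmax.mono fun t ht =>
    calc f (γ t) ≤ ‖f‖ * ‖γ t‖ := (le_abs_self _).trans (f.le_opNorm _)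
      _ ≤ f (γ a) := by rw [hf.1, one_mul, hf.2]; exact ht
  exact hfmax.hasDerivAt_eq_zero (f.hasFDerivAt.comp_hasDerivAt a hγ)

theorem LinearMap.IsAlt.linearIndependent_pair {K M : Type*} [Field K] [AddCommGroup M]
    [Module K M] {B : M →ₗ[K] M →ₗ[K] K} (hB : B.IsAlt) {x y : M} (hxy : B x y ≠ 0) :
    LinearIndependent K ![x, y] := by
  rw [LinearIndependent.pair_iff]
  intro s t hst
  have hx : B x (s • x + t • y) = 0 := by rw [hst, map_zero]
  have hy : B y (s • x + t • y) = 0 := by rw [hst, map_zero]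
  have hyx : B y x = -B x y := (hB.neg x y).symm
  simp only [map_add, map_smul, smul_eq_mul, hB.self_eq_zero, hyx] at hx hy
  exact ⟨by simpa [hxy] using hy, by simpa [hxy] using hx⟩

theorem LinearMap.ext_pair_of_finrank_eq_two {K V M : Type*} [Field K] [AddCommGroup V]
    [Module K V] [FiniteDimensional K V] [AddCommGroup M] [Module K M]
    (hdim : Module.finrank K V = 2) {x y : V} (hxy : LinearIndependent K ![x, y])
    {g h : V →ₗ[K] M} (hx : g x = h x) (hy : g y = h y) : g = h :=
  LinearMap.ext_on_range (hxy.span_eq_top_of_card_eq_finrank' (by simp [hdim]))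
    (Fin.forall_fin_two.mpr ⟨hx, hy⟩)

theorem stmt_15_general [FiniteDimensional ℝ X] (hdim : Module.finrank ℝ X = 2)
    (ω : X →ₗ[ℝ] X →ₗ[ℝ] ℝ) (hω : IsSymplecticForm ω)
    (γ γ' : ℝ → X) (hderiv : ∀ a : ℝ, HasDerivAt γ (γ' a) a)
    (hunit : ∀ a : ℝ, ‖γ a‖ = 1) (harea : ∀ a : ℝ, ω (γ a) (γ' a) = 1) :
    ∀ a : ℝ, antinorm ω (γ' a) = 1 := by
  intro a
  have halt : ω.IsAlt := hω.1
  obtain ⟨f, hf⟩ : ∃ f, IsNormingFunctional (γ a) f :=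
    exists_dual_vector ℝ (γ a) (by simp [hunit a])
  have hmax : IsLocalMax (fun t => ‖γ t‖) a :=
    .of_forall fun t => ((hunit t).trans (hunit a).symm).le
  have hfv : f (γ' a) = 0 := hf.apply_deriv_eq_zero hmax (hderiv a)
  have hωf : LinearMap.toContinuousLinearMap (ω (γ' a)) = -f := by
    refine ContinuousLinearMap.coe_injective <| LinearMap.ext_pair_of_finrank_eq_two hdim
      (halt.linearIndependent_pair (x := γ a) (y := γ' a) (by simp [harea a])) ?_ ?_
    · simp [← halt.neg (γ a), harea a, hf.2, hunit a]
    · simp [halt.self_eq_zero, hfv]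
  rw [antinorm_eq_norm_toContinuousLinearMap, hωf, norm_neg, hf.1]

theorem stmt_15 [FiniteDimensional ℝ X] (hdim : Module.finrank ℝ X = 2)
    (hsm : SmoothNormedSpace X)
    (ω : X →ₗ[ℝ] X →ₗ[ℝ] ℝ) (hω : IsSymplecticForm ω)
    (γ γ' : ℝ → X) (hderiv : ∀ a : ℝ, HasDerivAt γ (γ' a) a)
    (hunit : ∀ a : ℝ, ‖γ a‖ = 1) (harea : ∀ a : ℝ, ω (γ a) (γ' a) = 1) :
    ∀ a : ℝ, antinorm ω (γ' a) = 1 :=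
  stmt_15_general hdim ω hω γ γ' hderiv hunit harea
end

section
/- Let X be a smooth finite-dimensional real normed space and define s : X × X → ℝ by s(x,y) := ‖x‖·f_x(y) for x ≠ 0, and s(x,y) := 0 if x = 0. Then s is the unique norm-generating semi-inner product on X; that is: (a) y ↦ s(z,y) is linear for every z ∈ X; (b) s(α·x, y) = α·s(x,y) for all α ∈ ℝ and x, y ∈ X; (c) s(x,x) = ‖x‖² for all x (in particular s(x,x) ≥ 0 with equality iff x = 0); (d) s(x,y)² ≤ s(x,x)·s(y,y) for all x, y; and moreover any function s' : X × X → ℝ satisfying (a), (b), (d), s'(x,x) ≥ 0 with equality iff x = 0, and s'(x,x) = ‖x‖² for all x, coincides with s. -/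
variable {X : Type*} [NormedAddCommGroup X] [NormedSpace ℝ X]

/-!
Scaling `x` by `a ≠ 0` turns a norming functional `f` of `x` into the norming functional
`sign a • f` of `a • x`, so by smoothness `s` is homogeneous; Cauchy–Schwarz for `s` is just
`‖f_x‖ = 1`. Conversely, for any norm-generating semi-inner product `s'` and `x ≠ 0`,
Cauchy–Schwarz bounds `‖s'(x, ·)‖` by `‖x‖` while `s'(x, x) = ‖x‖²`, so `‖x‖⁻¹ s'(x, ·)` is a
norming functional of `x`; smoothness forces it to be `f_x`.
-/

/-- The semi-inner product `s(x, y) = ‖x‖ f_x(y)` built from a choice `F` of norming functionals;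
the value of `F 0` is irrelevant since it is multiplied by `‖0‖ = 0`. -/
noncomputable def normingSIP (F : X → X →L[ℝ] ℝ) (x y : X) : ℝ :=
  ‖x‖ * F x y

namespace IsNormingFunctional

variable {x : X} {f : X →L[ℝ] ℝ}

theorem abs_apply_le (hf : IsNormingFunctional x f) (y : X) : |f y| ≤ ‖y‖ := by
  simpa [hf.1] using f.le_opNorm y

theorem sign_smul (hf : IsNormingFunctional x f) {a : ℝ} (ha : a ≠ 0) :
    IsNormingFunctional (a • x) ((SignType.sign a : ℝ) • f) := by
  have habs : |(SignType.sign a : ℝ)| = 1 := by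
    rcases ha.lt_or_gt with h | h <;> simp [h]
  refine ⟨by rw [norm_smul, hf.1, Real.norm_eq_abs, habs, mul_one], ?_⟩
  rw [smul_apply, map_smul, hf.2, norm_smul, Real.norm_eq_abs, smul_eq_mul,
    smul_eq_mul, ← mul_assoc, sign_mul_self]

theorem of_opNorm_le (hx : x ≠ 0) (g : X →L[ℝ] ℝ) (hgx : g x = ‖x‖ ^ 2) (hg : ‖g‖ ≤ ‖x‖) :
    IsNormingFunctional x (‖x‖⁻¹ • g) := by
  have hxpos : 0 < ‖x‖ := norm_pos_iff.mpr hx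
  have hg' : ‖x‖ ≤ ‖g‖ := by
    have := g.le_opNorm x
    rw [hgx, Real.norm_eq_abs, abs_of_nonneg (by positivity), sq] at this
    exact le_of_mul_le_mul_right this hxpos
  refine ⟨?_, ?_⟩
  · rw [norm_smul, norm_inv, norm_norm, le_antisymm hg hg', inv_mul_cancel₀ hxpos.ne']
  · rw [smul_apply, hgx, smul_eq_mul]
    field_simp

end IsNormingFunctional

section normingSIP

variable {F : X → X →L[ℝ] ℝ} (hF : ∀ x : X, x ≠ 0 → IsNormingFunctional x (F x))
include hF

theorem normingSIP_self (x : X) : normingSIP F x x = ‖x‖ ^ 2 := by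
  rcases eq_or_ne x 0 with rfl | hx
  · simp [normingSIP]
  · rw [normingSIP, (hF x hx).2, sq]

theorem sq_normingSIP_le (x y : X) :
    normingSIP F x y ^ 2 ≤ normingSIP F x x * normingSIP F y y := by
  rw [normingSIP_self hF, normingSIP_self hF, normingSIP, mul_pow]
  rcases eq_or_ne x 0 with rfl | hx
  · simp
  · obtain ⟨hlo, hhi⟩ := abs_le.mp ((hF x hx).abs_apply_le y)
    exact mul_le_mul_of_nonneg_left (sq_le_sq' hlo hhi) (sq_nonneg _)

theorem SmoothNormedSpace.normingSIP_smul_left (hsm : SmoothNormedSpace X) (a : ℝ) (x y : X) :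
    normingSIP F (a • x) y = a * normingSIP F x y := by
  rcases eq_or_ne a 0 with rfl | ha
  · simp [normingSIP]
  rcases eq_or_ne x 0 with rfl | hx
  · simp [normingSIP]
  have hax : a • x ≠ 0 := smul_ne_zero ha hx
  have hFax : F (a • x) = (SignType.sign a : ℝ) • F x :=
    (hsm _ hax).unique (hF _ hax) ((hF x hx).sign_smul ha)
  rw [normingSIP, normingSIP, hFax, norm_smul, Real.norm_eq_abs, smul_apply,
    smul_eq_mul]
  linear_combination (‖x‖ * F x y) * abs_mul_sign a

theorem SmoothNormedSpace.eq_normingSIP (hsm : SmoothNormedSpace X) {T : X → X → ℝ}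
    (hlin : ∀ (z u v : X) (a b : ℝ), T z (a • u + b • v) = a * T z u + b * T z v)
    (hcs : ∀ x y : X, T x y ^ 2 ≤ T x x * T y y) (hnorm : ∀ x : X, T x x = ‖x‖ ^ 2) :
    T = normingSIP F := by
  have hbound : ∀ x y : X, |T x y| ≤ ‖x‖ * ‖y‖ := fun x y =>
    abs_le_of_sq_le_sq (by simpa only [hnorm, mul_pow] using hcs x y) (by positivity)
  funext x y
  rcases eq_or_ne x 0 with rfl | hx
  · simpa [normingSIP] using hbound 0 y
  have hlinx : IsLinearMap ℝ (T x) :=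
    ⟨fun u v => by simpa using hlin x u v 1 1, fun a u => by simpa using hlin x u 0 a 0⟩
  let g : X →L[ℝ] ℝ := (IsLinearMap.mk' _ hlinx).mkContinuous ‖x‖ (hbound x)
  have hg : IsNormingFunctional x (‖x‖⁻¹ • g) :=
    .of_opNorm_le hx g (hnorm x) (LinearMap.mkContinuous_norm_le _ (norm_nonneg x) _)
  have hFx : F x = ‖x‖⁻¹ • g := (hsm x hx).unique (hF x hx) hg
  rw [normingSIP, hFx, smul_apply, smul_eq_mul, ← mul_assoc,
    mul_inv_cancel₀ (norm_ne_zero_iff.mpr hx), one_mul]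
  rfl

end normingSIP

theorem stmt_17_general (hsm : SmoothNormedSpace X)
    (F : X → X →L[ℝ] ℝ) (hF : ∀ x : X, x ≠ 0 → IsNormingFunctional x (F x))
    -- the candidate semi-inner product `s x y = ‖x‖ ⬝ f_x y` for `x ≠ 0`, `s 0 y = 0`
    (S : X → X → ℝ)
    (hS0 : ∀ y : X, S 0 y = 0)
    (hS1 : ∀ x y : X, x ≠ 0 → S x y = ‖x‖ * F x y) :
    -- (a) linearity in the second variable
    (∀ (z u v : X) (a b : ℝ), S z (a • u + b • v) = a * S z u + b * S z v) ∧
    -- (b) homogeneity in the first variable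
    (∀ (a : ℝ) (x y : X), S (a • x) y = a * S x y) ∧
    -- (c) the quadratic form is the squared norm (so positive definite)
    (∀ x : X, S x x = ‖x‖ ^ 2) ∧
    (∀ x : X, 0 ≤ S x x) ∧ (∀ x : X, S x x = 0 ↔ x = 0) ∧
    -- (d) Cauchy–Schwarz
    (∀ x y : X, (S x y) ^ 2 ≤ S x x * S y y) ∧
    -- uniqueness among norm-generating semi-inner products
    (∀ S' : X → X → ℝ,
      (∀ (z u v : X) (a b : ℝ), S' z (a • u + b • v) = a * S' z u + b * S' z v) →
      (∀ (a : ℝ) (x y : X), S' (a • x) y = a * S' x y) →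
      (∀ x y : X, (S' x y) ^ 2 ≤ S' x x * S' y y) →
      (∀ x : X, 0 ≤ S' x x) → (∀ x : X, S' x x = 0 ↔ x = 0) →
      (∀ x : X, S' x x = ‖x‖ ^ 2) →
      S' = S) := by
  obtain rfl : S = normingSIP F := by
    funext x y
    rcases eq_or_ne x 0 with rfl | hx
    · simp [hS0, normingSIP]
    · exact hS1 x y hx
  refine ⟨fun z u v a b => ?_, hsm.normingSIP_smul_left hF, normingSIP_self hF,
    fun x => ?_, fun x => ?_, sq_normingSIP_le hF,
    fun S' hlin _ hcs _ _ hnorm => hsm.eq_normingSIP hF hlin hcs hnorm⟩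
  · simp only [normingSIP, map_add, map_smul, smul_eq_mul]
    ring
  · rw [normingSIP_self hF]
    positivity
  · rw [normingSIP_self hF, sq_eq_zero_iff, norm_eq_zero]

theorem stmt_17 [FiniteDimensional ℝ X] (hsm : SmoothNormedSpace X)
    (F : X → X →L[ℝ] ℝ) (hF : ∀ x : X, x ≠ 0 → IsNormingFunctional x (F x))
    -- the candidate semi-inner product `s x y = ‖x‖ ⬝ f_x y` for `x ≠ 0`, `s 0 y = 0`
    (S : X → X → ℝ)
    (hS0 : ∀ y : X, S 0 y = 0)
    (hS1 : ∀ x y : X, x ≠ 0 → S x y = ‖x‖ * F x y) :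
    -- (a) linearity in the second variable
    (∀ (z u v : X) (a b : ℝ), S z (a • u + b • v) = a * S z u + b * S z v) ∧
    -- (b) homogeneity in the first variable
    (∀ (a : ℝ) (x y : X), S (a • x) y = a * S x y) ∧
    -- (c) the quadratic form is the squared norm (so positive definite)
    (∀ x : X, S x x = ‖x‖ ^ 2) ∧
    (∀ x : X, 0 ≤ S x x) ∧ (∀ x : X, S x x = 0 ↔ x = 0) ∧
    -- (d) Cauchy–Schwarz
    (∀ x y : X, (S x y) ^ 2 ≤ S x x * S y y) ∧
    -- uniqueness among norm-generating semi-inner products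
    (∀ S' : X → X → ℝ,
      (∀ (z u v : X) (a b : ℝ), S' z (a • u + b • v) = a * S' z u + b * S' z v) →
      (∀ (a : ℝ) (x y : X), S' (a • x) y = a * S' x y) →
      (∀ x y : X, (S' x y) ^ 2 ≤ S' x x * S' y y) →
      (∀ x : X, 0 ≤ S' x x) → (∀ x : X, S' x x = 0 ↔ x = 0) →
      (∀ x : X, S' x x = ‖x‖ ^ 2) →
      S' = S) :=
  stmt_17_general hsm F hF S hS0 hS1
end
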